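/- arXiv:1504.00255 — 5 statements merged into one kernel-verified Lean document; each statement's English description precedes it below -/
import Mathlib

section
/- Let n ≥ 2, G = Sp(n+1), K = {diag(B,q) : B ∈ Sp(n), q ∈ Sp(1)} ⊆ G, and N = {diag(A,q₁,q₂) : A ∈ Sp(n−1), q₁,q₂ ∈ Sp(1)} ⊆ G. Consider the action of G × K × N on G × G given by (g,k,h)·(g₁,g₂) = (g g₁ k⁻¹, g g₂ h⁻¹). Then two pairs (g₁,g₂) and (h₁,h₂) in G × G lie in the same orbit of this action if and only if ‖v₀(g₂⁻¹g₁)‖ = ‖v₀(h₂⁻¹h₁)‖, |vₙ(g₂⁻¹g₁)| = |vₙ(h₂⁻¹h₁)|, and |vₙ₊₁(g₂⁻¹g₁)| = |vₙ₊₁(h₂⁻¹h₁)|. -/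
open scoped Quaternion

noncomputable section

/-- `Sp m` is the group of `m × m` quaternionic matrices `g` with `g* g = 1`. -/
abbrev Sp (m : ℕ) : Type := ↥(unitary (Matrix (Fin m) (Fin m) ℍ[ℝ]))

/-- The subgroup `K = {diag(B, q) : B ∈ Sp(n), q ∈ Sp(1)}` of `Sp (n+1)`, described as the
set of unitary matrices whose off-diagonal blocks (mixing the first `n` indices with the
last index) vanish. -/
def Kset (n : ℕ) : Set (Sp (n + 1)) :=
  {x | ∀ i j : Fin (n + 1),
    (((i : ℕ) < n ∧ (j : ℕ) = n) ∨ ((i : ℕ) = n ∧ (j : ℕ) < n)) → x.val i j = 0}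

/-- The subgroup `N = {diag(A, q₁, q₂) : A ∈ Sp(n−1), q₁, q₂ ∈ Sp(1)}` of `Sp (n+1)`,
described as the set of unitary matrices vanishing outside the top-left `(n−1) × (n−1)`
block and the last two diagonal entries. -/
def Nset (n : ℕ) : Set (Sp (n + 1)) :=
  {x | ∀ i j : Fin (n + 1),
    ¬(((i : ℕ) < n - 1 ∧ (j : ℕ) < n - 1) ∨ (i = j ∧ n - 1 ≤ (i : ℕ))) → x.val i j = 0}

/-- `v g i` is the `i`-th entry of the last column of `g ∈ Sp (n+1)`. -/
def v {n : ℕ} (g : Sp (n + 1)) (i : Fin (n + 1)) : ℍ[ℝ] :=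
  g.val i (Fin.last n)

/-- The Euclidean norm of the vector `v₀(g) ∈ ℍ^{n-1}` of the first `n − 1` entries of the
last column of `g`. -/
def normV0 {n : ℕ} (g : Sp (n + 1)) : ℝ :=
  Real.sqrt (∑ i : Fin (n - 1), ‖v g (Fin.castLE (by omega) i)‖ ^ 2)

/-!
Writing `x = g₂⁻¹ g₁`, the pair `(g₁, g₂)` is carried to `(h₁, h₂)` exactly when
`h₂⁻¹ h₁ ∈ N x K`, so one has to classify the double cosets `N \ G / K`. Right multiplication by
`k⁻¹ ∈ K` multiplies the last column of `x` on the right by a unit quaternion, and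
`diag(A, q₁, q₂) ∈ N` acts on it blockwise, so the norms of its last two entries are invariant;
so is `‖v₀‖`, the column being a unit vector. Conversely, `Sp(m)` acts transitively on vectors of
a given length (a diagonal phase followed by a quaternionic Householder reflection), hence some
`h ∈ N` maps the last column of `x` to that of `y`; then `k = y⁻¹ h x` fixes the last basis
vector, so it lies in `K`.
-/

open Matrix

theorem Quaternion.exists_norm_eq_one_mul_eq {a b : ℍ[ℝ]} (hab : ‖a‖ = ‖b‖) :
    ∃ q : ℍ[ℝ], ‖q‖ = 1 ∧ q * a = b := by
  rcases eq_or_ne a 0 with rfl | ha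
  · exact ⟨1, norm_one, by rw [norm_zero, eq_comm, norm_eq_zero] at hab; simp [hab]⟩
  · refine ⟨b * a⁻¹, ?_, inv_mul_cancel_right₀ ha b⟩
    rw [norm_mul, norm_inv, ← hab, mul_inv_cancel₀ (norm_ne_zero_iff.2 ha)]

theorem Quaternion.star_mul_self_eq_norm_sq (a : ℍ[ℝ]) :
    star a * a = ((‖a‖ ^ 2 : ℝ) : ℍ[ℝ]) := by
  rw [Quaternion.star_mul_self, Quaternion.normSq_eq_norm_mul_self, sq]

namespace Matrix

section fromBlocksCompl

variable {ι α : Type*} (p : ι → Prop) [DecidablePred p]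

def fromBlocksCompl [Zero α] (A : Matrix {i // p i} {i // p i} α)
    (D : Matrix {i // ¬p i} {i // ¬p i} α) : Matrix ι ι α :=
  (fromBlocks A 0 0 D).submatrix (Equiv.sumCompl p).symm (Equiv.sumCompl p).symm

theorem star_fromBlocksCompl [AddMonoid α] [StarAddMonoid α] (A : Matrix {i // p i} {i // p i} α)
    (D : Matrix {i // ¬p i} {i // ¬p i} α) :
    star (fromBlocksCompl p A D) = fromBlocksCompl p (star A) (star D) := by
  simp only [fromBlocksCompl, star_eq_conjTranspose, conjTranspose_submatrix,
    fromBlocks_conjTranspose, conjTranspose_zero]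

theorem fromBlocksCompl_mul [Fintype ι] [NonUnitalNonAssocSemiring α]
    (A A' : Matrix {i // p i} {i // p i} α) (D D' : Matrix {i // ¬p i} {i // ¬p i} α) :
    fromBlocksCompl p A D * fromBlocksCompl p A' D' = fromBlocksCompl p (A * A') (D * D') := by
  simp [fromBlocksCompl, submatrix_mul_equiv, fromBlocks_multiply]

theorem fromBlocksCompl_one [Zero α] [One α] [DecidableEq ι] :
    fromBlocksCompl p (1 : Matrix {i // p i} {i // p i} α) 1 = 1 := by
  rw [fromBlocksCompl, fromBlocks_one, submatrix_one_equiv]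

theorem fromBlocksCompl_mem_unitary [Fintype ι] [DecidableEq ι] [Semiring α] [StarRing α]
    {A : Matrix {i // p i} {i // p i} α} {D : Matrix {i // ¬p i} {i // ¬p i} α}
    (hA : A ∈ unitary (Matrix _ _ α)) (hD : D ∈ unitary (Matrix _ _ α)) :
    fromBlocksCompl p A D ∈ unitary (Matrix ι ι α) :=
  ⟨by rw [star_fromBlocksCompl, fromBlocksCompl_mul, hA.1, hD.1, fromBlocksCompl_one],
    by rw [star_fromBlocksCompl, fromBlocksCompl_mul, hA.2, hD.2, fromBlocksCompl_one]⟩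

theorem fromBlocksCompl_diagonal_apply_of_ne [Zero α] [DecidableEq ι]
    (A : Matrix {i // p i} {i // p i} α) (d : {i // ¬p i} → α) {i j : ι} (hij : i ≠ j)
    (hp : ¬(p i ∧ p j)) : fromBlocksCompl p A (diagonal d) i j = 0 := by
  by_cases hi : p i <;> by_cases hj : p j
  · exact absurd ⟨hi, hj⟩ hp
  · simp [fromBlocksCompl, Equiv.sumCompl_symm_apply_of_pos hi,
      Equiv.sumCompl_symm_apply_of_neg hj]
  · simp [fromBlocksCompl, Equiv.sumCompl_symm_apply_of_neg hi,
      Equiv.sumCompl_symm_apply_of_pos hj]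
  · simp [fromBlocksCompl, Equiv.sumCompl_symm_apply_of_neg hi,
      Equiv.sumCompl_symm_apply_of_neg hj, hij]

theorem fromBlocksCompl_mulVec_apply_of_pos [Fintype ι] [NonUnitalNonAssocSemiring α]
    (A : Matrix {i // p i} {i // p i} α) (D : Matrix {i // ¬p i} {i // ¬p i} α) (w : ι → α)
    {i : ι} (hi : p i) :
    (fromBlocksCompl p A D *ᵥ w) i = (A *ᵥ fun j => w j) ⟨i, hi⟩ := by
  simp only [fromBlocksCompl, submatrix_mulVec_equiv, Equiv.symm_symm, fromBlocks_mulVec,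
    zero_mulVec, add_zero, Function.comp_apply, Equiv.sumCompl_symm_apply_of_pos hi, Sum.elim_inl]
  rfl

theorem fromBlocksCompl_mulVec_apply_of_neg [Fintype ι] [NonUnitalNonAssocSemiring α]
    (A : Matrix {i // p i} {i // p i} α) (D : Matrix {i // ¬p i} {i // ¬p i} α) (w : ι → α)
    {i : ι} (hi : ¬p i) :
    (fromBlocksCompl p A D *ᵥ w) i = (D *ᵥ fun j => w j) ⟨i, hi⟩ := by
  simp only [fromBlocksCompl, submatrix_mulVec_equiv, Equiv.symm_symm, fromBlocks_mulVec,
    zero_mulVec, zero_add, Function.comp_apply, Equiv.sumCompl_symm_apply_of_neg hi, Sum.elim_inr]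
  rfl

end fromBlocksCompl

variable {ι : Type*} [Fintype ι]

theorem star_dotProduct_self_eq_sum_norm_sq (w : ι → ℍ[ℝ]) :
    star w ⬝ᵥ w = ((∑ i, ‖w i‖ ^ 2 : ℝ) : ℍ[ℝ]) := by
  simp only [dotProduct, Pi.star_apply, Quaternion.star_mul_self_eq_norm_sq]
  rw [← Quaternion.algebraMap_def, map_sum]

variable [DecidableEq ι]

theorem mem_unitary_of_star_mul_self {U : Matrix ι ι ℍ[ℝ]} (h : star U * U = 1) :
    U ∈ unitary (Matrix ι ι ℍ[ℝ]) :=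
  ⟨h, mul_eq_one_comm.mp h⟩

theorem sum_norm_sq_apply_left_of_mem_unitary {U : Matrix ι ι ℍ[ℝ]}
    (hU : U ∈ unitary (Matrix ι ι ℍ[ℝ])) (j : ι) : ∑ i, ‖U i j‖ ^ 2 = 1 := by
  have h : (star U * U) j j = (1 : Matrix ι ι ℍ[ℝ]) j j := by
    rw [Unitary.star_mul_self_of_mem hU]
  rw [mul_apply, one_apply_eq] at h
  rw [← Quaternion.coe_injective.eq_iff, ← star_dotProduct_self_eq_sum_norm_sq,
    Quaternion.coe_one, ← h]
  rfl

theorem sum_norm_sq_apply_right_of_mem_unitary {U : Matrix ι ι ℍ[ℝ]}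
    (hU : U ∈ unitary (Matrix ι ι ℍ[ℝ])) (i : ι) : ∑ j, ‖U i j‖ ^ 2 = 1 := by
  simpa [star_apply] using sum_norm_sq_apply_left_of_mem_unitary (Unitary.star_mem hU) i

theorem norm_apply_eq_one_of_mem_unitary {U : Matrix ι ι ℍ[ℝ]}
    (hU : U ∈ unitary (Matrix ι ι ℍ[ℝ])) {i j : ι} (hcol : ∀ i' ≠ i, U i' j = 0) :
    ‖U i j‖ = 1 := by
  have h := sum_norm_sq_apply_left_of_mem_unitary hU j
  rw [Finset.sum_eq_single i (fun i' _ hi' => by simp [hcol i' hi']) (by simp)] at h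
  exact (pow_eq_one_iff_of_nonneg (norm_nonneg _) two_ne_zero).mp h

theorem apply_eq_zero_of_mem_unitary {U : Matrix ι ι ℍ[ℝ]}
    (hU : U ∈ unitary (Matrix ι ι ℍ[ℝ])) {i j : ι} (hcol : ∀ i' ≠ i, U i' j = 0) {j' : ι}
    (hj' : j' ≠ j) : U i j' = 0 := by
  have h := sum_norm_sq_apply_right_of_mem_unitary hU i
  rw [← Finset.add_sum_erase _ _ (Finset.mem_univ j), norm_apply_eq_one_of_mem_unitary hU hcol,
    one_pow, add_eq_left, Finset.sum_eq_zero_iff_of_nonneg (fun _ _ => by positivity)] at h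
  simpa using h j' (by simp [hj'])

theorem diagonal_mem_unitary {d : ι → ℍ[ℝ]} (hd : ∀ i, ‖d i‖ = 1) :
    diagonal d ∈ unitary (Matrix ι ι ℍ[ℝ]) := by
  refine mem_unitary_of_star_mul_self ?_
  rw [star_eq_conjTranspose, diagonal_conjTranspose, diagonal_mul_diagonal, ← diagonal_one]
  congr 1
  funext i
  rw [Pi.star_apply, Quaternion.star_mul_self_eq_norm_sq, hd]
  simp

/-- The quaternionic Householder reflection `1 - 2 d d* / ‖d‖²`; it is `1` when `d = 0`, since
then `2 / ‖d‖² = 0`. -/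
def householder (d : ι → ℍ[ℝ]) : Matrix ι ι ℍ[ℝ] :=
  1 - (2 / ∑ i, ‖d i‖ ^ 2 : ℝ) • vecMulVec d (star d)

theorem householder_mem_unitary (d : ι → ℍ[ℝ]) :
    householder d ∈ unitary (Matrix ι ι ℍ[ℝ]) := by
  set s := ∑ i, ‖d i‖ ^ 2
  set P := vecMulVec d (star d)
  have hP : P * P = s • P := by
    rw [vecMulVec_mul_vecMulVec, star_dotProduct_self_eq_sum_norm_sq]
    ext1 i j
    simp only [P, smul_apply, vecMulVec_apply, Pi.smul_apply, smul_eq_mul,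
      Quaternion.coe_mul_eq_smul, mul_smul_comm]
    rfl
  have hstar : star (householder d) = householder d := by
    ext1 i j
    simp [householder, star_apply, vecMulVec_apply, one_apply, Quaternion.star_smul, eq_comm,
      apply_ite star]
  have hc : (2 / s) * (2 / s) * s - 2 * (2 / s) = 0 := by
    rcases eq_or_ne s 0 with hs | hs
    · simp [hs]
    · field_simp; ring
  refine mem_unitary_of_star_mul_self ?_
  rw [hstar, householder, sub_mul, mul_sub, mul_sub, smul_mul_smul, hP, smul_smul, one_mul,
    one_mul, mul_one]
  calc (1 : Matrix ι ι ℍ[ℝ]) - (2 / s) • P - ((2 / s) • P - (2 / s * (2 / s) * s) • P)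
      = 1 + ((2 / s) * (2 / s) * s - 2 * (2 / s)) • P := by module
    _ = 1 := by rw [hc, zero_smul, add_zero]

theorem householder_sub_mulVec {u c : ι → ℍ[ℝ]} (hnorm : ∑ i, ‖u i‖ ^ 2 = ∑ i, ‖c i‖ ^ 2)
    {r : ℝ} (hr : star c ⬝ᵥ u = r) : householder (u - c) *ᵥ u = c := by
  set S := ∑ i, ‖u i‖ ^ 2
  have hdu : star (u - c) ⬝ᵥ u = ((S - r : ℝ) : ℍ[ℝ]) := by
    rw [star_sub, sub_dotProduct, star_dotProduct_self_eq_sum_norm_sq, hr, Quaternion.coe_sub]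
  have hdd : ∑ i, ‖(u - c) i‖ ^ 2 = 2 * (S - r) := by
    rw [show 2 * (S - r) = (S - r) - (r - S) by ring, ← Quaternion.coe_injective.eq_iff,
      ← star_dotProduct_self_eq_sum_norm_sq, dotProduct_sub, hdu, star_sub, sub_dotProduct,
      star_dotProduct, hr, star_dotProduct_self_eq_sum_norm_sq, ← hnorm, Quaternion.star_coe]
    simp only [Quaternion.coe_sub]
  rcases eq_or_ne (S - r) 0 with h0 | h0
  · have huc : u - c = 0 := funext fun i => by
      have := (Finset.sum_eq_zero_iff_of_nonneg (fun i _ => sq_nonneg ‖(u - c) i‖)).1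
        (by rw [hdd, h0, mul_zero]) i (Finset.mem_univ _)
      simpa using this
    rw [huc, sub_eq_zero.mp huc]
    simp [householder]
  · have hop : MulOpposite.op ((S - r : ℝ) : ℍ[ℝ]) • (u - c) = (S - r) • (u - c) :=
      funext fun i => Quaternion.mul_coe_eq_smul _ _
    rw [householder, sub_mulVec, one_mulVec, smul_mulVec, vecMulVec_mulVec, hdu, hdd, hop,
      smul_smul, show 2 / (2 * (S - r)) * (S - r) = 1 by field_simp, one_smul, sub_sub_cancel]

theorem exists_mem_unitary_mulVec_eq_single (w : ι → ℍ[ℝ]) (i₀ : ι) :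
    ∃ U ∈ unitary (Matrix ι ι ℍ[ℝ]),
      U *ᵥ w = Pi.single i₀ ((√(∑ i, ‖w i‖ ^ 2) : ℝ) : ℍ[ℝ]) := by
  set S := ∑ i, ‖w i‖ ^ 2
  -- the phase `θ` makes the `i₀`-th entry real, so that `⟨c, u⟩` below is real
  obtain ⟨θ, hθ, hθw⟩ := Quaternion.exists_norm_eq_one_mul_eq
    (a := w i₀) (b := ((‖w i₀‖ : ℝ) : ℍ[ℝ])) (by rw [Quaternion.norm_coe, norm_norm])
  set d := Function.update (1 : ι → ℍ[ℝ]) i₀ θ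
  have hd : ∀ i, ‖d i‖ = 1 := fun i => by
    rcases eq_or_ne i i₀ with rfl | hi
    · simp [d, hθ]
    · simp [d, hi]
  set u := diagonal d *ᵥ w
  set c : ι → ℍ[ℝ] := Pi.single i₀ ((√S : ℝ) : ℍ[ℝ])
  have hc : ∑ i, ‖c i‖ ^ 2 = S := by
    rw [Finset.sum_eq_single i₀ (fun i _ hi => by simp [c, hi]) (by simp)]
    simp [c, Real.sq_sqrt (Finset.sum_nonneg fun i _ => sq_nonneg ‖w i‖), S]
  have hu : ∑ i, ‖u i‖ ^ 2 = ∑ i, ‖c i‖ ^ 2 := by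
    simp [hc, u, mulVec_diagonal, hd, S]
  have hcu : star c ⬝ᵥ u = ((√S * ‖w i₀‖ : ℝ) : ℍ[ℝ]) := by
    rw [← Pi.single_star, single_dotProduct, show u i₀ = d i₀ * w i₀ from mulVec_diagonal _ _ _,
      show d i₀ = θ from Function.update_self .., hθw, Quaternion.star_coe, Quaternion.coe_mul]
  exact ⟨householder (u - c) * diagonal d, mul_mem (householder_mem_unitary _)
    (diagonal_mem_unitary hd), by rw [← mulVec_mulVec, householder_sub_mulVec hu hcu]⟩

theorem exists_mem_unitary_mulVec_eq {w w' : ι → ℍ[ℝ]}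
    (hnorm : ∑ i, ‖w i‖ ^ 2 = ∑ i, ‖w' i‖ ^ 2) :
    ∃ U ∈ unitary (Matrix ι ι ℍ[ℝ]), U *ᵥ w = w' := by
  cases isEmpty_or_nonempty ι with
  | inl _ => exact ⟨1, one_mem _, Subsingleton.elim _ _⟩
  | inr hι =>
    obtain ⟨i₀⟩ := hι
    obtain ⟨A, hA, hAw⟩ := exists_mem_unitary_mulVec_eq_single w i₀
    obtain ⟨B, hB, hBw⟩ := exists_mem_unitary_mulVec_eq_single w' i₀
    refine ⟨star B * A, mul_mem (Unitary.star_mem hB) hA, ?_⟩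
    rw [← mulVec_mulVec, hAw, hnorm, ← hBw, mulVec_mulVec, Unitary.star_mul_self_of_mem hB,
      one_mulVec]

theorem exists_mem_unitary_mulVec_eq_of_compl (p : ι → Prop) [DecidablePred p]
    {w w' : ι → ℍ[ℝ]} (hnorm : ∑ i, ‖w i‖ ^ 2 = ∑ i, ‖w' i‖ ^ 2)
    (hcompl : ∀ i, ¬p i → ‖w i‖ = ‖w' i‖) :
    ∃ U ∈ unitary (Matrix ι ι ℍ[ℝ]),
      (∀ i j, i ≠ j → ¬(p i ∧ p j) → U i j = 0) ∧ U *ᵥ w = w' := by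
  have hp : ∑ i : {i // p i}, ‖w i‖ ^ 2 = ∑ i : {i // p i}, ‖w' i‖ ^ 2 := by
    have h := Fintype.sum_subtype_add_sum_subtype p (fun i => ‖w i‖ ^ 2)
    have h' := Fintype.sum_subtype_add_sum_subtype p (fun i => ‖w' i‖ ^ 2)
    have hnp : ∑ i : {i // ¬p i}, ‖w i‖ ^ 2 = ∑ i : {i // ¬p i}, ‖w' i‖ ^ 2 :=
      Finset.sum_congr rfl fun i _ => by rw [hcompl i i.2]
    linarith
  obtain ⟨A, hA, hAw⟩ := exists_mem_unitary_mulVec_eq hp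
  choose d hd hdw using fun i : {i // ¬p i} => Quaternion.exists_norm_eq_one_mul_eq (hcompl i i.2)
  refine ⟨fromBlocksCompl p A (diagonal d),
    fromBlocksCompl_mem_unitary p hA (diagonal_mem_unitary hd),
    fun i j hij hp => fromBlocksCompl_diagonal_apply_of_ne p A d hij hp, funext fun i => ?_⟩
  by_cases hi : p i
  · rw [fromBlocksCompl_mulVec_apply_of_pos p _ _ _ hi, hAw]
  · rw [fromBlocksCompl_mulVec_apply_of_neg p _ _ _ hi, mulVec_diagonal, hdw]

end Matrix

theorem exists_pair_eq_mul_mul_inv_iff {G : Type*} [Group G] (K N : Set G) (g₁ g₂ h₁ h₂ : G) :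
    (∃ g, ∃ k ∈ K, ∃ h ∈ N, h₁ = g * g₁ * k⁻¹ ∧ h₂ = g * g₂ * h⁻¹) ↔
      ∃ k ∈ K, ∃ h ∈ N, h₂⁻¹ * h₁ = h * (g₂⁻¹ * g₁) * k⁻¹ := by
  constructor
  · rintro ⟨g, k, hk, h, hh, rfl, rfl⟩
    exact ⟨k, hk, h, hh, by group⟩
  · rintro ⟨k, hk, h, hh, hx⟩
    refine ⟨h₂ * h * g₂⁻¹, k, hk, h, hh, ?_, by group⟩
    calc h₁ = h₂ * (h₂⁻¹ * h₁) := by group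
      _ = h₂ * h * g₂⁻¹ * g₁ * k⁻¹ := by rw [hx]; group

variable {n : ℕ}

theorem v_mul (g g' : Sp (n + 1)) : v (g * g') = g.val *ᵥ v g' :=
  rfl

theorem sum_norm_sq_v (g : Sp (n + 1)) : ∑ i, ‖v g i‖ ^ 2 = 1 :=
  sum_norm_sq_apply_left_of_mem_unitary g.2 _

theorem normV0_eq (hn : 1 ≤ n) (g : Sp (n + 1)) :
    normV0 g = √(1 - ‖v g ⟨n - 1, by omega⟩‖ ^ 2 - ‖v g (Fin.last n)‖ ^ 2) := by
  obtain ⟨m, rfl⟩ : ∃ m, n = m + 1 := ⟨n - 1, by omega⟩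
  rw [normV0, ← sum_norm_sq_v g, Fin.sum_univ_castSucc, Fin.sum_univ_castSucc]
  show √(∑ i : Fin m, ‖v g i.castSucc.castSucc‖ ^ 2) = _
  rw [show (⟨m + 1 - 1, by omega⟩ : Fin (m + 2)) = (Fin.last m).castSucc from Fin.ext (by simp)]
  congr 1
  ring

section Kset

variable {k : Sp (n + 1)}

theorem apply_ne_last_last_of_mem_Kset (hk : k ∈ Kset n) {i : Fin (n + 1)}
    (hi : i ≠ Fin.last n) : k.val i (Fin.last n) = 0 :=
  hk i _ (Or.inl ⟨Fin.val_lt_last hi, Fin.val_last n⟩)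

theorem apply_last_ne_last_of_mem_Kset (hk : k ∈ Kset n) {j : Fin (n + 1)}
    (hj : j ≠ Fin.last n) : k.val (Fin.last n) j = 0 :=
  hk _ j (Or.inr ⟨Fin.val_last n, Fin.val_lt_last hj⟩)

theorem norm_apply_last_last_of_mem_Kset (hk : k ∈ Kset n) :
    ‖k.val (Fin.last n) (Fin.last n)‖ = 1 :=
  norm_apply_eq_one_of_mem_unitary k.2 fun _ hi => apply_ne_last_last_of_mem_Kset hk hi

theorem mem_Kset_of_v_eq_zero (hcol : ∀ i ≠ Fin.last n, v k i = 0) : k ∈ Kset n := by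
  rintro i j (⟨hi, hj⟩ | ⟨hi, hj⟩)
  · rw [show j = Fin.last n from Fin.ext hj]
    exact hcol i (Fin.ne_of_lt hi)
  · rw [show i = Fin.last n from Fin.ext hi]
    exact apply_eq_zero_of_mem_unitary k.2 hcol (Fin.ne_of_lt hj)

theorem v_mul_inv_of_mem_Kset (hk : k ∈ Kset n) (g : Sp (n + 1)) (i : Fin (n + 1)) :
    v (g * k⁻¹) i = v g i * star (k.val (Fin.last n) (Fin.last n)) := by
  show (g.val * star k.val) i (Fin.last n) = _
  rw [mul_apply, Finset.sum_eq_single (Fin.last n) (fun j _ hj => by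
    rw [star_apply, apply_last_ne_last_of_mem_Kset hk hj, star_zero, mul_zero]) (by simp),
    star_apply]
  rfl

end Kset

section Nset

variable {h : Sp (n + 1)}

theorem apply_eq_zero_of_mem_Nset (hh : h ∈ Nset n) {i j : Fin (n + 1)} (hij : i ≠ j)
    (hi : n - 1 ≤ (i : ℕ) ∨ n - 1 ≤ (j : ℕ)) : h.val i j = 0 :=
  hh i j fun hij' => hij'.elim (fun h' => by omega) fun h' => hij h'.1

theorem norm_apply_self_of_mem_Nset (hh : h ∈ Nset n) {i : Fin (n + 1)} (hi : n - 1 ≤ (i : ℕ)) :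
    ‖h.val i i‖ = 1 :=
  norm_apply_eq_one_of_mem_unitary h.2 fun _ hi' => apply_eq_zero_of_mem_Nset hh hi' (Or.inr hi)

theorem v_mul_of_mem_Nset (hh : h ∈ Nset n) (g : Sp (n + 1)) {i : Fin (n + 1)}
    (hi : n - 1 ≤ (i : ℕ)) : v (h * g) i = h.val i i * v g i := by
  show (h.val * g.val) i (Fin.last n) = _
  rw [mul_apply, Finset.sum_eq_single i (fun _ _ hj => by
    rw [apply_eq_zero_of_mem_Nset hh (Ne.symm hj) (Or.inl hi), zero_mul]) (by simp)]
  rfl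

end Nset

theorem norm_v_mul_mul_inv {h k : Sp (n + 1)} (hh : h ∈ Nset n) (hk : k ∈ Kset n) (x : Sp (n + 1))
    {i : Fin (n + 1)} (hi : n - 1 ≤ (i : ℕ)) : ‖v (h * x * k⁻¹) i‖ = ‖v x i‖ := by
  rw [v_mul_inv_of_mem_Kset hk, v_mul_of_mem_Nset hh _ hi, norm_mul, norm_mul, norm_star,
    norm_apply_self_of_mem_Nset hh hi, norm_apply_last_last_of_mem_Kset hk, one_mul, mul_one]

theorem exists_mem_Kset_mem_Nset_eq_iff (x y : Sp (n + 1)) :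
    (∃ k ∈ Kset n, ∃ h ∈ Nset n, y = h * x * k⁻¹) ↔
      ‖v x ⟨n - 1, by omega⟩‖ = ‖v y ⟨n - 1, by omega⟩‖ ∧
        ‖v x (Fin.last n)‖ = ‖v y (Fin.last n)‖ := by
  constructor
  · rintro ⟨k, hk, h, hh, rfl⟩
    exact ⟨(norm_v_mul_mul_inv hh hk x le_rfl).symm,
      (norm_v_mul_mul_inv hh hk x (by simp)).symm⟩
  · rintro ⟨hpen, hlast⟩
    have hcompl : ∀ i : Fin (n + 1), ¬(i : ℕ) < n - 1 → ‖v x i‖ = ‖v y i‖ := by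
      intro i hi
      obtain hi' | hi' : (i : ℕ) = n - 1 ∨ (i : ℕ) = n := by omega
      · rwa [show i = ⟨n - 1, by omega⟩ from Fin.ext hi']
      · rwa [show i = Fin.last n from Fin.ext hi']
    obtain ⟨U, hU, hUN, hUx⟩ := exists_mem_unitary_mulVec_eq_of_compl
      (fun i : Fin (n + 1) => (i : ℕ) < n - 1) (by rw [sum_norm_sq_v, sum_norm_sq_v]) hcompl
    set h : Sp (n + 1) := ⟨U, hU⟩
    have hh : h ∈ Nset n := fun i j hij => hUN i j
      (by rintro rfl; exact hij (Or.inr ⟨rfl, by omega⟩)) fun hp => hij (Or.inl hp)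
    refine ⟨y⁻¹ * h * x, mem_Kset_of_v_eq_zero fun i hi => ?_, h, hh, by group⟩
    rw [mul_assoc, v_mul, v_mul, show h.val *ᵥ v x = v y from hUx, ← v_mul, inv_mul_cancel]
    exact one_apply_ne hi

/-- Proposition 2.5: `(g₁, g₂)` and `(h₁, h₂)` lie in the same orbit of the
`G × K × N` action `(g, k, h) · (g₁, g₂) = (g g₁ k⁻¹, g g₂ h⁻¹)` on `G × G` iff the
invariants `‖v₀(g₂⁻¹ g₁)‖`, `|vₙ(g₂⁻¹ g₁)|`, `|vₙ₊₁(g₂⁻¹ g₁)|` agree. -/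
theorem statement0 (n : ℕ) (hn : 2 ≤ n) (g₁ g₂ h₁ h₂ : Sp (n + 1)) :
    (∃ g : Sp (n + 1), ∃ k ∈ Kset n, ∃ h ∈ Nset n,
        h₁ = g * g₁ * k⁻¹ ∧ h₂ = g * g₂ * h⁻¹) ↔
      (normV0 (g₂⁻¹ * g₁) = normV0 (h₂⁻¹ * h₁) ∧
        ‖v (g₂⁻¹ * g₁) ⟨n - 1, by omega⟩‖ = ‖v (h₂⁻¹ * h₁) ⟨n - 1, by omega⟩‖ ∧
        ‖v (g₂⁻¹ * g₁) (Fin.last n)‖ = ‖v (h₂⁻¹ * h₁) (Fin.last n)‖) := by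
  rw [exists_pair_eq_mul_mul_inv_iff, exists_mem_Kset_mem_Nset_eq_iff, normV0_eq (by omega),
    normV0_eq (by omega)]
  constructor
  · rintro ⟨hpen, hlast⟩
    exact ⟨by rw [hpen, hlast], hpen, hlast⟩
  · rintro ⟨-, hpen, hlast⟩
    exact ⟨hpen, hlast⟩
end
end

section
/- Let n ≥ 1 and let X, Y be n×n quaternionic matrices that are skew-Hermitian (i.e., X* = −X and Y* = −Y, where * is the conjugate transpose) and whose top-left (n−1)×(n−1) blocks vanish (i.e., Xᵢⱼ = Yᵢⱼ = 0 whenever both i ≤ n−1 and j ≤ n−1). If XY = YX, then X and Y are linearly dependent over ℝ. -/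
open scoped Quaternion Matrix

noncomputable section

lemma quatQ (p q : ℍ[ℝ]) (hp : p ≠ 0) (h : star (p * star q) = p * star q) :
    ∃ r : ℝ, q = r • p := by
  have h2 : p * star q = (((p * star q).re : ℝ) : ℍ[ℝ]) :=
    Quaternion.star_eq_self.mp h
  have hs : q * star p = (((p * star q).re : ℝ) : ℍ[ℝ]) := by
    have := congrArg star h2
    simpa only [star_mul, star_star, Quaternion.star_coe] using this
  have hn0 : Quaternion.normSq p ≠ 0 := Quaternion.normSq_ne_zero.mpr hp
  have cne : ((Quaternion.normSq p : ℝ) : ℍ[ℝ]) ≠ 0 := fun hc =>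
    hn0 (Quaternion.coe_injective (by simpa using hc))
  refine ⟨(p * star q).re / Quaternion.normSq p, ?_⟩
  have key : q * ((Quaternion.normSq p : ℝ) : ℍ[ℝ]) = (((p * star q).re : ℝ) : ℍ[ℝ]) * p := by
    rw [← Quaternion.star_mul_self, ← mul_assoc, hs]
  have hthis := congrArg (· * ((Quaternion.normSq p : ℝ) : ℍ[ℝ])⁻¹) key
  simp only [mul_assoc, mul_inv_cancel₀ cne, mul_one] at hthis
  conv_lhs => rw [hthis]
  rw [← Quaternion.coe_mul_eq_smul, div_eq_mul_inv, Quaternion.coe_mul, mul_assoc,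
    Quaternion.coe_inv, ← Quaternion.coe_inv,
    Quaternion.coe_commutes ((Quaternion.normSq p)⁻¹) p, ← Quaternion.coe_commutes]

/-- Skew-Hermitian quaternionic `n × n` matrices whose top-left `(n−1) × (n−1)` blocks
vanish commute only if they are linearly dependent over `ℝ`. -/
theorem statement4 (n : ℕ) (hn : 1 ≤ n) (X Y : Matrix (Fin n) (Fin n) ℍ[ℝ])
    (hX : Xᴴ = -X) (hY : Yᴴ = -Y)
    (hX0 : ∀ i j : Fin n, (i : ℕ) < n - 1 → (j : ℕ) < n - 1 → X i j = 0)
    (hY0 : ∀ i j : Fin n, (i : ℕ) < n - 1 → (j : ℕ) < n - 1 → Y i j = 0)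
    (hcomm : X * Y = Y * X) :
    ¬ LinearIndependent ℝ ![X, Y] := by
  set e : Fin n := ⟨n - 1, by omega⟩ with he
  have hlt : ∀ i : Fin n, i ≠ e → (i : ℕ) < n - 1 := by
    intro i hi
    have h1 : (i : ℕ) < n := i.isLt
    have h2 : (i : ℕ) ≠ n - 1 := fun h => hi (Fin.ext (by simpa [he] using h))
    omega
  have hXs : ∀ i j, star (X j i) = - X i j := by
    intro i j
    have := congrFun (congrFun hX i) j
    simpa [Matrix.conjTranspose_apply, Matrix.neg_apply] using this
  have hYs : ∀ i j, star (Y j i) = - Y i j := by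
    intro i j
    have := congrFun (congrFun hY i) j
    simpa [Matrix.conjTranspose_apply, Matrix.neg_apply] using this
  have hXrow : ∀ i j, X i j = - star (X j i) := by
    intro i j; rw [hXs i j, neg_neg]
  have hYrow : ∀ i j, Y i j = - star (Y j i) := by
    intro i j; rw [hYs i j, neg_neg]
  have hc : ∀ i j, ∑ k, X i k * Y k j = ∑ k, Y i k * X k j := by
    intro i j
    have := congrFun (congrFun hcomm i) j
    simpa [Matrix.mul_apply] using this
  -- Relation R1
  have R1 : ∀ i j : Fin n, i ≠ e → j ≠ e →
      X i e * star (Y j e) = Y i e * star (X j e) := by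
    intro i j hi hj
    have h := hc i j
    rw [Finset.sum_eq_single e
        (fun b _ hb => by rw [hX0 i b (hlt i hi) (hlt b hb), zero_mul])
        (fun hb => absurd (Finset.mem_univ e) hb),
      Finset.sum_eq_single e
        (fun b _ hb => by rw [hY0 i b (hlt i hi) (hlt b hb), zero_mul])
        (fun hb => absurd (Finset.mem_univ e) hb)] at h
    rw [hYrow e j, hXrow e j, mul_neg, mul_neg, neg_inj] at h
    exact h
  -- Relation R2
  have R2 : ∀ j : Fin n, j ≠ e →
      X e e * star (Y j e) = Y e e * star (X j e) := by
    intro j hj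
    have h := hc e j
    rw [Finset.sum_eq_single e
        (fun b _ hb => by rw [hY0 b j (hlt b hb) (hlt j hj), mul_zero])
        (fun hb => absurd (Finset.mem_univ e) hb),
      Finset.sum_eq_single e
        (fun b _ hb => by rw [hX0 b j (hlt b hb) (hlt j hj), mul_zero])
        (fun hb => absurd (Finset.mem_univ e) hb)] at h
    rw [hYrow e j, hXrow e j, mul_neg, mul_neg, neg_inj] at h
    exact h
  rw [LinearIndependent.pair_iff]
  push_neg
  suffices hdep : X = 0 ∨ ∃ r : ℝ, Y = r • X by
    rcases hdep with h | ⟨r, hr⟩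
    · exact ⟨1, 0, by simp [h], fun h' => absurd h' one_ne_zero⟩
    · refine ⟨r, -1, ?_, fun _ => by norm_num⟩
      rw [hr]
      simp
  by_cases hx : ∀ i : Fin n, i ≠ e → X i e = 0
  · by_cases ha : X e e = 0
    · -- X = 0
      left
      funext i j
      show X i j = 0
      by_cases hj : j = e
      · subst hj
        by_cases hi : i = e
        · subst hi; exact ha
        · exact hx i hi
      · by_cases hi : i = e
        · subst hi
          rw [hXrow e j, hx j hj, star_zero, neg_zero]
        · exact hX0 i j (hlt i hi) (hlt j hj)
    · -- X e e ≠ 0, column x = 0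
      right
      have hy : ∀ j : Fin n, j ≠ e → Y j e = 0 := by
        intro j hj
        have h := R2 j hj
        rw [hx j hj, star_zero, mul_zero] at h
        have := (mul_eq_zero.mp h).resolve_left ha
        rw [← star_star (Y j e), this, star_zero]
      have hcorner : X e e * Y e e = Y e e * X e e := by
        have h := hc e e
        rw [Finset.sum_eq_single e
            (fun b _ hb => by
              rw [hXrow e b, hx b hb, star_zero, neg_zero, zero_mul])
            (fun hb => absurd (Finset.mem_univ e) hb),
          Finset.sum_eq_single e
            (fun b _ hb => by
              rw [hYrow e b, hy b hb, star_zero, neg_zero, zero_mul])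
            (fun hb => absurd (Finset.mem_univ e) hb)] at h
        exact h
      have hstar : star (X e e * star (Y e e)) = X e e * star (Y e e) := by
        rw [star_mul, star_star, hXs e e, hYs e e, mul_neg, mul_neg, neg_inj]
        exact hcorner.symm
      obtain ⟨r, hr⟩ := quatQ (X e e) (Y e e) ha hstar
      refine ⟨r, ?_⟩
      funext i j
      show Y i j = r • X i j
      by_cases hj : j = e
      · subst hj
        by_cases hi : i = e
        · subst hi; exact hr
        · rw [hy i hi, hx i hi, smul_zero]
      · by_cases hi : i = e
        · subst hi
          rw [hYrow e j, hy j hj, hXrow e j, hx j hj, star_zero, neg_zero,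
            smul_zero]
        · rw [hY0 i j (hlt i hi) (hlt j hj), hX0 i j (hlt i hi) (hlt j hj),
            smul_zero]
  · push_neg at hx
    obtain ⟨k, hk, hk0⟩ := hx
    right
    have hstar : star (X k e * star (Y k e)) = X k e * star (Y k e) := by
      rw [star_mul, star_star, R1 k k hk hk]
    obtain ⟨r, hr⟩ := quatQ (X k e) (Y k e) hk0 hstar
    have hsk : star (X k e) ≠ 0 := star_ne_zero.mpr hk0
    have hrk : star (Y k e) = r • star (X k e) := by
      rw [hr, Quaternion.star_smul]
    have hcol : ∀ i : Fin n, Y i e = r • X i e := by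
      intro i
      by_cases hi : i = e
      · subst hi
        have h := R2 k hk
        rw [hrk, mul_smul_comm, ← smul_mul_assoc] at h
        exact (mul_right_cancel₀ hsk h).symm
      · have h := R1 i k hi hk
        rw [hrk, mul_smul_comm, ← smul_mul_assoc] at h
        exact (mul_right_cancel₀ hsk h).symm
    refine ⟨r, ?_⟩
    funext i j
    show Y i j = r • X i j
    by_cases hj : j = e
    · subst hj; exact hcol i
    · by_cases hi : i = e
      · subst hi
        rw [hYrow e j, hXrow e j, hcol j, Quaternion.star_smul, smul_neg]
      · rw [hY0 i j (hlt i hi) (hlt j hj), hX0 i j (hlt i hi) (hlt j hj),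
          smul_zero]
end
end

section
/- Let a, c, d ∈ ℍ and b ∈ Im ℍ, and define the 3×3 quaternionic matrices X with rows (0, a, 0), (−ā, b, 0), (0, 0, 0) and Y with rows (0, 0, c), (0, 0, d), (−c̄, −d̄, 0). Suppose X and Y are linearly independent over ℝ. Then XY = YX if and only if a = 0 and d = 0. -/
open scoped Quaternion

noncomputable section

/-- Proposition 3.1: with `X`, `Y` as in Section 3 and `{X, Y}` linearly independent
over `ℝ`, `X` and `Y` commute iff `a = 0` and `d = 0`. -/
theorem statement5 (a c d b : ℍ[ℝ]) (hb : b.re = 0)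
    (X Y : Matrix (Fin 3) (Fin 3) ℍ[ℝ])
    (hX : X = !![0, a, 0; -star a, b, 0; 0, 0, 0])
    (hY : Y = !![0, 0, c; 0, 0, d; -star c, -star d, 0])
    (hind : LinearIndependent ℝ ![X, Y]) :
    X * Y = Y * X ↔ (a = 0 ∧ d = 0) := by
  have hXne : X ≠ 0 := hind.ne_zero 0
  have hYne : Y ≠ 0 := hind.ne_zero 1
  subst hX hY
  rw [Matrix.mul_fin_three, Matrix.mul_fin_three, ← Matrix.ext_iff]
  simp only [Fin.forall_fin_succ]
  simp [Matrix.vecHead, Matrix.vecTail]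
  constructor
  · rintro ⟨had, h2, -, h4⟩
    rcases had with rfl | rfl
    · refine ⟨rfl, ?_⟩
      simp [mul_eq_zero] at h2
      rcases h2 with rfl | rfl
      · refine absurd (Matrix.ext fun i j => ?_) hXne
        fin_cases i <;> fin_cases j <;> simp [Matrix.vecHead, Matrix.vecTail]
      · rfl
    · refine ⟨?_, rfl⟩
      simp [neg_eq_zero, mul_eq_zero, eq_comm] at h4
      rcases h4 with hc | rfl
      · have : c = 0 := by simpa using (congrArg star hc).symm
        subst this
        refine absurd (Matrix.ext fun i j => ?_) hYne
        fin_cases i <;> fin_cases j <;> simp [Matrix.vecHead, Matrix.vecTail]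
      · rfl
  · rintro ⟨rfl, rfl⟩
    simp [Matrix.vecHead, Matrix.vecTail]
end
end

section
/- Let α, θ ∈ (0, π/2) with θ ≠ π/4, and suppose there exist a nonzero b ∈ Im ℍ and a nonzero c ∈ ℍ satisfying the two equations −b cos²α cos θ sin θ = c̄ sin α sin²θ + c sin α cos²θ and b cos α sin α cos θ = c̄ cos α sin θ. Then tan²α = sin²θ / (cos²θ − sin²θ). -/
open Real
open scoped Quaternion

noncomputable section

/-- Proposition 3.2: if `V = W` for some nonzero `b ∈ Im ℍ` and nonzero `c ∈ ℍ`, then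
`tan²α = sin²θ / (cos²θ − sin²θ)`. -/
theorem statement6 (α θ : ℝ) (hα : α ∈ Set.Ioo 0 (π / 2)) (hθ : θ ∈ Set.Ioo 0 (π / 2))
    (hθ4 : θ ≠ π / 4) (b c : ℍ[ℝ]) (hb : b.re = 0) (hb0 : b ≠ 0) (hc0 : c ≠ 0)
    (h1 : (-(cos α ^ 2 * cos θ * sin θ)) • b
        = (sin α * sin θ ^ 2) • star c + (sin α * cos θ ^ 2) • c)
    (h2 : (cos α * sin α * cos θ) • b = (cos α * sin θ) • star c) :
    tan α ^ 2 = sin θ ^ 2 / (cos θ ^ 2 - sin θ ^ 2) := by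
  obtain ⟨hα0, hα2⟩ := hα
  obtain ⟨hθ0, hθ2⟩ := hθ
  have hca : 0 < cos α := Real.cos_pos_of_mem_Ioo ⟨by linarith [Real.pi_pos], hα2⟩
  have hsa : 0 < sin α := Real.sin_pos_of_pos_of_lt_pi hα0 (by linarith [Real.pi_pos])
  have hco : 0 < cos θ := Real.cos_pos_of_mem_Ioo ⟨by linarith [Real.pi_pos], hθ2⟩
  have hs : 0 < sin θ := Real.sin_pos_of_pos_of_lt_pi hθ0 (by linarith [Real.pi_pos])
  have hstarb : star b = -b := by
    ext <;> simp [hb]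
  -- from h2, cancel cos α
  have h2' : (sin α * cos θ) • b = sin θ • star c := by
    apply smul_right_injective ℍ[ℝ] hca.ne'
    show cos α • (sin α * cos θ) • b = cos α • sin θ • star c
    rw [smul_smul, smul_smul]
    rw [show cos α * (sin α * cos θ) = cos α * sin α * cos θ by ring]
    exact h2
  have hc : star c = ((sin α * cos θ) / sin θ) • b := by
    apply smul_right_injective ℍ[ℝ] hs.ne'
    show sin θ • star c = sin θ • (sin α * cos θ / sin θ) • b
    rw [← h2', smul_smul, mul_div_cancel₀ _ hs.ne']
  have hcc : c = -(((sin α * cos θ) / sin θ)) • b := by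
    have := congrArg star hc
    simpa [hstarb] using this
  rw [hc, hcc, smul_smul, smul_smul, ← add_smul] at h1
  have key : -(cos α ^ 2 * cos θ * sin θ)
      = sin α * sin θ ^ 2 * (sin α * cos θ / sin θ)
        + sin α * cos θ ^ 2 * -(sin α * cos θ / sin θ) :=
    smul_left_injective ℝ hb0 h1
  have hne : cos θ ^ 2 - sin θ ^ 2 ≠ 0 := by
    intro h
    have h' : sin θ = cos θ := by nlinarith
    have htan : tan θ = tan (π / 4) := by
      rw [Real.tan_pi_div_four, Real.tan_eq_sin_div_cos, h', div_self hco.ne']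
    exact hθ4 (Real.injOn_tan ⟨by linarith [Real.pi_pos], by linarith⟩
      ⟨by linarith [Real.pi_pos], by linarith [Real.pi_pos]⟩ htan)
  rw [Real.tan_eq_sin_div_cos, div_pow, div_eq_div_iff (by positivity) hne]
  field_simp at key
  nlinarith [key, hs.ne', sq_nonneg (sin θ)]
end
end

section
/- Let μ ≠ 0 and η be real numbers and let b ∈ ℍ be a purely imaginary quaternion of norm 1 (so b² = −1). Define the 4×4 quaternionic matrices X₀ with rows (0, 0, 1, 0), (0, 0, μb, 0), (−1, μb, ηb, 0), (0, 0, 0, 0) and Y₀ with rows (0, 0, 0, 1), (0, 0, 0, −b/μ), (0, 0, 0, 0), (−1, −b/μ, 0, 0). Then X₀Y₀ = Y₀X₀. -/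
open scoped Quaternion

noncomputable section

/-- The matrices `X₀` and `Y₀` of Proposition 4.1 commute, for any reals `μ ≠ 0`, `η` and
any purely imaginary unit quaternion `b`. -/
theorem statement8 (μ η : ℝ) (hμ : μ ≠ 0) (b : ℍ[ℝ]) (hb : b.re = 0) (hb1 : ‖b‖ = 1)
    (X₀ Y₀ : Matrix (Fin 4) (Fin 4) ℍ[ℝ])
    (hX : X₀ = !![0, 0, 1, 0;
                  0, 0, μ • b, 0;
                  -1, μ • b, η • b, 0;
                  0, 0, 0, 0])
    (hY : Y₀ = !![0, 0, 0, 1;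
                  0, 0, 0, -(μ⁻¹ • b);
                  0, 0, 0, 0;
                  -1, -(μ⁻¹ • b), 0, 0]) :
    X₀ * Y₀ = Y₀ * X₀ := by
  have hbb : b * b = -1 := by
    have hs : star b = -b := by
      ext <;> simp [Quaternion.re_star, hb]
    have hn : Quaternion.normSq b = 1 := by
      rw [Quaternion.normSq_eq_norm_mul_self, hb1]; ring
    have h2 : star b * b = (((Quaternion.normSq b : ℝ) : ℍ[ℝ])) := Quaternion.star_mul_self b
    rw [hs, hn, neg_mul] at h2
    simpa [neg_eq_iff_eq_neg] using h2
  subst hX hY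
  refine Matrix.ext fun i j => ?_
  fin_cases i <;> fin_cases j <;>
    simp [Matrix.mul_apply, Fin.sum_univ_four, smul_mul_smul_comm, hbb,
      inv_mul_cancel₀ hμ, mul_inv_cancel₀ hμ, smul_smul, mul_comm]
end
end
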